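/- Fix d ≥ 1, h ∈ (1/2, 1], m > 0, set γ* = (2h−1)·d, and fix any B > γ*. Define A(γ) = Φ(√(d/(d+γ²)) · (1 + γ(2h−1)) · m). Then there exist constants C₁, C₂ > 0 such that for all γ ∈ [0, B]: C₁·(γ − γ*)² ≤ A(γ*) − A(γ) ≤ C₂·(γ − γ*)². (This is the quantitative part of Proposition 4: adapting the hop-aggregation parameter from γ_S to the optimal γ_T = d_T(2h_T−1) improves target accuracy by Θ((γ_T − γ_S)²), hence by Θ((Δh)² + (Δd)²).) -/

import Mathlib

/-!
Write `s = 2h - 1`, `g(γ) = √(d/(d+γ²)) (1 + γs) m` (`gcnScore d s m γ`) for the argument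
of `Φ` and `G = g(γ*)`. A direct computation gives the Lagrange-type identity
`G² - g(γ)² = m² (γ - γ*)² / (d + γ²)`,
so `G - g(γ) = (G² - g(γ)²) / (G + g(γ))` is of exact order `(γ - γ*)²` on `[0, B]`.
Since `0 ≤ g(γ) ≤ G`, the density of `Φ` lies between `φ(G)` and `φ(0)` on `[g(γ), G]`,
so `Φ(G) - Φ(g(γ))` is comparable to `G - g(γ)`.
-/

open MeasureTheory

noncomputable def stdNormalCDF (x : ℝ) : ℝ :=
  ∫ t in Set.Iic x, (Real.sqrt (2 * Real.pi))⁻¹ * Real.exp (-t ^ 2 / 2)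

/-- The expected accuracy `A(γ) = Φ(√(d/(d+γ²)) · (1 + γ(2h-1)) · m)` of a single-layer GCN
with hop-aggregation parameter `γ` on `CSBM(μ, -μ, d, h)` with `‖μ‖ = m` (Corollary 1). -/
noncomputable def gcnAccuracyGamma (d h m γ : ℝ) : ℝ :=
  stdNormalCDF (Real.sqrt (d / (d + γ ^ 2)) * (1 + γ * (2 * h - 1)) * m)

open Set

noncomputable def stdNormalPDF (t : ℝ) : ℝ :=
  (Real.sqrt (2 * Real.pi))⁻¹ * Real.exp (-t ^ 2 / 2)

lemma integrable_stdNormalPDF : Integrable stdNormalPDF := by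
  have h : stdNormalPDF =
      fun t ↦ (Real.sqrt (2 * Real.pi))⁻¹ * Real.exp (-(1 / 2) * t ^ 2) := by
    funext t
    rw [stdNormalPDF]
    ring_nf
  rw [h]
  exact (integrable_exp_neg_mul_sq (by norm_num)).const_mul _

lemma stdNormalPDF_pos (t : ℝ) : 0 < stdNormalPDF t := by
  unfold stdNormalPDF
  positivity

lemma antitoneOn_stdNormalPDF : AntitoneOn stdNormalPDF (Ici 0) := by
  intro x hx y _ hxy
  have hsq : x ^ 2 ≤ y ^ 2 := pow_le_pow_left₀ hx hxy 2
  unfold stdNormalPDF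
  gcongr

lemma stdNormalCDF_sub_eq_intervalIntegral (a b : ℝ) :
    stdNormalCDF a - stdNormalCDF b = ∫ t in b..a, stdNormalPDF t :=
  intervalIntegral.integral_Iic_sub_Iic integrable_stdNormalPDF.integrableOn
    integrable_stdNormalPDF.integrableOn

lemma stdNormalPDF_mul_sub_le_stdNormalCDF_sub {a b : ℝ} (hb : 0 ≤ b) (hba : b ≤ a) :
    stdNormalPDF a * (a - b) ≤ stdNormalCDF a - stdNormalCDF b := by
  rw [stdNormalCDF_sub_eq_intervalIntegral, mul_comm, ← smul_eq_mul,
    ← intervalIntegral.integral_const]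
  refine intervalIntegral.integral_mono_on hba intervalIntegrable_const
    integrable_stdNormalPDF.intervalIntegrable fun t ht ↦ ?_
  exact antitoneOn_stdNormalPDF (hb.trans ht.1) (hb.trans (ht.1.trans ht.2)) ht.2

lemma stdNormalCDF_sub_le_stdNormalPDF_zero_mul {a b : ℝ} (hb : 0 ≤ b) (hba : b ≤ a) :
    stdNormalCDF a - stdNormalCDF b ≤ stdNormalPDF 0 * (a - b) := by
  rw [stdNormalCDF_sub_eq_intervalIntegral, mul_comm, ← smul_eq_mul,
    ← intervalIntegral.integral_const]
  refine intervalIntegral.integral_mono_on hba integrable_stdNormalPDF.intervalIntegrable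
    intervalIntegrable_const fun t ht ↦ ?_
  exact antitoneOn_stdNormalPDF self_mem_Ici (hb.trans ht.1) (hb.trans ht.1)

lemma sq_sub_sq_div_two_mul_le_sub {G : ℝ} (hG : 0 < G) (g : ℝ) :
    (G ^ 2 - g ^ 2) / (2 * G) ≤ G - g := by
  rw [div_le_iff₀ (by positivity)]
  nlinarith [sq_nonneg (G - g)]

lemma sub_le_sq_sub_sq_div {G g : ℝ} (hG : 0 < G) (hg : 0 ≤ g) (hgG : g ≤ G) :
    G - g ≤ (G ^ 2 - g ^ 2) / G := by
  rw [le_div_iff₀ hG]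
  nlinarith [mul_nonneg hg (sub_nonneg.2 hgG)]

noncomputable def gcnScore (d s m γ : ℝ) : ℝ :=
  Real.sqrt (d / (d + γ ^ 2)) * (1 + γ * s) * m

lemma gcnAccuracyGamma_eq (d h m γ : ℝ) :
    gcnAccuracyGamma d h m γ = stdNormalCDF (gcnScore d (2 * h - 1) m γ) :=
  rfl

section gcnScore

variable {d s m : ℝ}

lemma gcnScore_sq (hd : 0 < d) (γ : ℝ) :
    gcnScore d s m γ ^ 2 = d / (d + γ ^ 2) * (1 + γ * s) ^ 2 * m ^ 2 := by
  rw [gcnScore, mul_pow, mul_pow, Real.sq_sqrt (by positivity)]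

lemma gcnScore_opt_sq_sub_sq (hd : 0 < d) (γ : ℝ) :
    gcnScore d s m (s * d) ^ 2 - gcnScore d s m γ ^ 2 =
      m ^ 2 * (γ - s * d) ^ 2 / (d + γ ^ 2) := by
  rw [gcnScore_sq hd, gcnScore_sq hd]
  field_simp
  ring

lemma gcnScore_opt_pos (hd : 0 < d) (hm : 0 < m) : 0 < gcnScore d s m (s * d) := by
  have : 0 < 1 + s * d * s := by nlinarith [mul_nonneg (sq_nonneg s) hd.le]
  unfold gcnScore
  positivity

lemma gcnScore_nonneg (hs : 0 ≤ s) (hm : 0 ≤ m) {γ : ℝ} (hγ : 0 ≤ γ) :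
    0 ≤ gcnScore d s m γ := by
  unfold gcnScore
  positivity

lemma gcnScore_le_opt (hd : 0 < d) (hm : 0 < m) (γ : ℝ) :
    gcnScore d s m γ ≤ gcnScore d s m (s * d) := by
  refine le_of_sq_le_sq ?_ (gcnScore_opt_pos hd hm).le
  have hgap : 0 ≤ gcnScore d s m (s * d) ^ 2 - gcnScore d s m γ ^ 2 := by
    rw [gcnScore_opt_sq_sub_sq hd]
    positivity
  linarith

lemma gcnScore_opt_sub_ge (hd : 0 < d) (hm : 0 < m) {γ B : ℝ} (hγB : γ ^ 2 ≤ B ^ 2) :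
    m ^ 2 / (2 * gcnScore d s m (s * d) * (d + B ^ 2)) * (γ - s * d) ^ 2 ≤
      gcnScore d s m (s * d) - gcnScore d s m γ := by
  have hG := gcnScore_opt_pos (s := s) hd hm
  calc m ^ 2 / (2 * gcnScore d s m (s * d) * (d + B ^ 2)) * (γ - s * d) ^ 2
      = m ^ 2 * (γ - s * d) ^ 2 / (d + B ^ 2) / (2 * gcnScore d s m (s * d)) := by
        field_simp
    _ ≤ m ^ 2 * (γ - s * d) ^ 2 / (d + γ ^ 2) / (2 * gcnScore d s m (s * d)) := by
        gcongr
    _ ≤ gcnScore d s m (s * d) - gcnScore d s m γ := by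
        rw [← gcnScore_opt_sq_sub_sq hd]
        exact sq_sub_sq_div_two_mul_le_sub hG _

lemma gcnScore_opt_sub_le (hd : 0 < d) (hs : 0 ≤ s) (hm : 0 < m) {γ : ℝ} (hγ : 0 ≤ γ) :
    gcnScore d s m (s * d) - gcnScore d s m γ ≤
      m ^ 2 / (gcnScore d s m (s * d) * d) * (γ - s * d) ^ 2 := by
  have hG := gcnScore_opt_pos (s := s) hd hm
  calc gcnScore d s m (s * d) - gcnScore d s m γ
      ≤ (gcnScore d s m (s * d) ^ 2 - gcnScore d s m γ ^ 2) / gcnScore d s m (s * d) :=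
        sub_le_sq_sub_sq_div hG (gcnScore_nonneg hs hm.le hγ) (gcnScore_le_opt hd hm γ)
    _ = m ^ 2 * (γ - s * d) ^ 2 / (d + γ ^ 2) / gcnScore d s m (s * d) := by
        rw [gcnScore_opt_sq_sub_sq hd]
    _ ≤ m ^ 2 * (γ - s * d) ^ 2 / d / gcnScore d s m (s * d) := by
        gcongr
        exact le_add_of_nonneg_right (sq_nonneg γ)
    _ = m ^ 2 / (gcnScore d s m (s * d) * d) * (γ - s * d) ^ 2 := by
        field_simp

end gcnScore

theorem adapting_gamma_accuracy_improvement_general (d h m B : ℝ) (hd : 1 ≤ d)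
    (hh1 : 1 / 2 < h) (hm : 0 < m) :
    ∃ C₁ > (0 : ℝ), ∃ C₂ > (0 : ℝ), ∀ γ ∈ Set.Icc (0 : ℝ) B,
      C₁ * (γ - (2 * h - 1) * d) ^ 2 ≤
        gcnAccuracyGamma d h m ((2 * h - 1) * d) - gcnAccuracyGamma d h m γ ∧
      gcnAccuracyGamma d h m ((2 * h - 1) * d) - gcnAccuracyGamma d h m γ ≤
        C₂ * (γ - (2 * h - 1) * d) ^ 2 := by
  have hd₀ : 0 < d := by linarith
  have hs : 0 ≤ 2 * h - 1 := by linarith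
  set G := gcnScore d (2 * h - 1) m ((2 * h - 1) * d)
  have hG : 0 < G := gcnScore_opt_pos hd₀ hm
  refine ⟨stdNormalPDF G * (m ^ 2 / (2 * G * (d + B ^ 2))),
    mul_pos (stdNormalPDF_pos G) (by positivity), stdNormalPDF 0 * (m ^ 2 / (G * d)),
    mul_pos (stdNormalPDF_pos 0) (by positivity), fun γ ⟨hγ, hγB⟩ ↦ ?_⟩
  set g := gcnScore d (2 * h - 1) m γ
  have hg : 0 ≤ g := gcnScore_nonneg hs hm.le hγ
  have hgG : g ≤ G := gcnScore_le_opt hd₀ hm γ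
  rw [gcnAccuracyGamma_eq, gcnAccuracyGamma_eq]
  constructor
  · calc _ = stdNormalPDF G * (m ^ 2 / (2 * G * (d + B ^ 2)) * (γ - (2 * h - 1) * d) ^ 2) :=
          mul_assoc _ _ _
      _ ≤ stdNormalPDF G * (G - g) := mul_le_mul_of_nonneg_left
          (gcnScore_opt_sub_ge hd₀ hm (pow_le_pow_left₀ hγ hγB 2)) (stdNormalPDF_pos G).le
      _ ≤ _ := stdNormalPDF_mul_sub_le_stdNormalCDF_sub hg hgG
  · calc _ ≤ stdNormalPDF 0 * (G - g) := stdNormalCDF_sub_le_stdNormalPDF_zero_mul hg hgG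
      _ ≤ stdNormalPDF 0 * (m ^ 2 / (G * d) * (γ - (2 * h - 1) * d) ^ 2) :=
          mul_le_mul_of_nonneg_left (gcnScore_opt_sub_le hd₀ hs hm hγ) (stdNormalPDF_pos 0).le
      _ = _ := (mul_assoc _ _ _).symm

/-- **Proposition 4 (quantitative gain from adapting γ).**
For `d ≥ 1`, `h ∈ (1/2, 1]`, `m > 0`, `γ* = (2h-1)d`, and any `B > γ*`, there exist
`C₁, C₂ > 0` such that for all `γ ∈ [0, B]`:
`C₁·(γ - γ*)² ≤ A(γ*) - A(γ) ≤ C₂·(γ - γ*)²`. -/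
theorem adapting_gamma_accuracy_improvement (d h m B : ℝ) (hd : 1 ≤ d)
    (hh1 : 1 / 2 < h) (hh2 : h ≤ 1) (hm : 0 < m) (hB : (2 * h - 1) * d < B) :
    ∃ C₁ > (0 : ℝ), ∃ C₂ > (0 : ℝ), ∀ γ ∈ Set.Icc (0 : ℝ) B,
      C₁ * (γ - (2 * h - 1) * d) ^ 2 ≤
        gcnAccuracyGamma d h m ((2 * h - 1) * d) - gcnAccuracyGamma d h m γ ∧
      gcnAccuracyGamma d h m ((2 * h - 1) * d) - gcnAccuracyGamma d h m γ ≤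
        C₂ * (γ - (2 * h - 1) * d) ^ 2 :=
  adapting_gamma_accuracy_improvement_general d h m B hd hh1 hm
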